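/- arXiv:1202.2717 — 2 statements merged into one kernel-verified Lean document; each statement's English description precedes it below -/
import Mathlib

section
/- Let A be a double Poisson algebra (an associative algebra with a double bracket {{-,-}} satisfying skew-symmetry {{a,b}} = -{{b,a}}° and the double Jacobi identity). Then the induced bracket {a,b} := μ({{a,b}}) descends to a well-defined Lie bracket on the commutator quotient A/[A,A]. -/
open scoped TensorProduct

/-- The `k`-linear span of commutators `ab - ba` in an algebra `A`. -/
def commutatorSpan (k A : Type) [Field k] [Ring A] [Algebra k A] : Submodule k A :=
  Submodule.span k {x : A | ∃ a b : A, x = a * b - b * a}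

/-- `{{x, b₁ ⊗ b₂}}_L := {{x, b₁}} ⊗ b₂`, viewed as a map `A ⊗ A → A ⊗ (A ⊗ A)`. -/
noncomputable def doubleBracketL (k A : Type) [Field k] [Ring A] [Algebra k A]
    (D : A →ₗ[k] A →ₗ[k] A ⊗[k] A) (x : A) :
    A ⊗[k] A →ₗ[k] A ⊗[k] (A ⊗[k] A) :=
  (TensorProduct.assoc k A A A).toLinearMap ∘ₗ LinearMap.rTensor A (D x)

/-- The cyclic permutation `σ(123)` of three tensor factors: `b₁ ⊗ b₂ ⊗ b₃ ↦ b₃ ⊗ b₁ ⊗ b₂`. -/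
noncomputable def cyc123 (k A : Type) [Field k] [Ring A] [Algebra k A] :
    A ⊗[k] (A ⊗[k] A) →ₗ[k] A ⊗[k] (A ⊗[k] A) :=
  (TensorProduct.comm k (A ⊗[k] A) A).toLinearMap ∘ₗ
    (TensorProduct.assoc k A A A).symm.toLinearMap

open TensorProduct LinearMap

/-!
Write `π : A → A/[A,A]` and `{a,b} = μ{{a,b}}`. Since `μ(u ⊗ v) ≡ μ(v ⊗ u)` modulo commutators,
skew-symmetry of `{{-,-}}` makes `π{-,-}` skew, and the derivation rule makes `π{a,-}` kill
commutators, hence so does `π{-,b}`: the bracket descends. The derivation rule also gives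
`π{a, μ t} = π μ₃({{a,t}}_L) + π μ₃({{a,t°}}_L)`, and `π ∘ μ₃` is invariant under `σ(123)`; so
`π μ₃` applied to the double Jacobi identities for `(a,b,c)` and `(a,c,b)`, together with
`{{c,b}} = -{{b,c}}°`, yields the cyclic Jacobi identity of `π{-,-}`.
-/

lemma leibniz_of_skew_of_cyclic {R M : Type*} [CommSemiring R] [AddCommGroup M] [Module R M]
    (L : M →ₗ[R] M →ₗ[R] M) (hskew : ∀ x y, L x y = -L y x)
    (hcyc : ∀ x y z, L x (L y z) + L y (L z x) + L z (L x y) = 0) (x y z : M) :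
    L x (L y z) = L (L x y) z + L y (L x z) := by
  rw [hskew (L x y), hskew x z, map_neg, ← sub_eq_zero, ← hcyc x y z]
  abel

section Multiplication

variable {R A : Type*} [CommSemiring R] [Semiring A] [Algebra R A]

lemma mul'_mul_one_tmul (t : A ⊗[R] A) (c : A) :
    mul' R A (t * ((1 : A) ⊗ₜ[R] c)) = mul' R A t * c := by
  induction t using TensorProduct.induction_on with
  | zero => simp
  | tmul x y => simp [mul_assoc]
  | add s t hs ht => simp only [add_mul, map_add, hs, ht]

lemma mul'_tmul_one_mul (b : A) (t : A ⊗[R] A) :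
    mul' R A ((b ⊗ₜ[R] (1 : A)) * t) = b * mul' R A t := by
  induction t using TensorProduct.induction_on with
  | zero => simp
  | tmul x y => simp [mul_assoc]
  | add s t hs ht => simp only [mul_add, map_add, hs, ht]

variable (R A) in
noncomputable def mul3 : A ⊗[R] (A ⊗[R] A) →ₗ[R] A :=
  mul' R A ∘ₗ lTensor A (mul' R A)

@[simp]
lemma mul3_tmul (a b c : A) : mul3 R A (a ⊗ₜ[R] (b ⊗ₜ[R] c)) = a * (b * c) := by
  simp [mul3]

lemma mul3_assoc_tmul (s : A ⊗[R] A) (c : A) :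
    mul3 R A (TensorProduct.assoc R A A A (s ⊗ₜ[R] c)) = mul' R A s * c := by
  induction s using TensorProduct.induction_on with
  | zero => simp
  | tmul x y => simp [mul_assoc]
  | add s t hs ht => simp only [add_tmul, map_add, hs, ht, add_mul]

end Multiplication

namespace DoublePoisson

variable {k A : Type} [Field k] [Ring A] [Algebra k A]

local notation "π" => Submodule.mkQ (commutatorSpan k A)

lemma mkQ_mul_comm (a b : A) : π (a * b) = π (b * a) := by
  rw [← sub_eq_zero, ← map_sub, Submodule.mkQ_apply, Submodule.Quotient.mk_eq_zero]
  exact Submodule.subset_span ⟨a, b, rfl⟩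

lemma mkQ_mul'_comm (t : A ⊗[k] A) :
    π (mul' k A (TensorProduct.comm k A A t)) = π (mul' k A t) := by
  induction t using TensorProduct.induction_on with
  | zero => simp
  | tmul x y => simpa using mkQ_mul_comm y x
  | add s t hs ht => simp only [map_add, hs, ht]

lemma mkQ_mul3_cyc123 (t : A ⊗[k] (A ⊗[k] A)) : π (mul3 k A (cyc123 k A t)) = π (mul3 k A t) := by
  induction t using TensorProduct.induction_on with
  | zero => simp
  | tmul a t =>
    induction t using TensorProduct.induction_on with
    | zero => simp
    | tmul b c =>
      simp only [cyc123, LinearMap.comp_apply, LinearEquiv.coe_coe, assoc_symm_tmul, comm_tmul,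
        mul3_tmul]
      rw [mkQ_mul_comm, mul_assoc]
    | add s t hs ht => simp only [tmul_add, map_add, hs, ht]
  | add s t hs ht => simp only [map_add, hs, ht]

variable (D : A →ₗ[k] A →ₗ[k] A ⊗[k] A)

def IsOuterDerivation : Prop :=
  ∀ a b c : A, D a (b * c) = D a b * ((1 : A) ⊗ₜ[k] c) + (b ⊗ₜ[k] (1 : A)) * D a c

def IsSkew : Prop :=
  ∀ a b : A, D a b = -TensorProduct.comm k A A (D b a)

def IsDoubleJacobi : Prop :=
  ∀ a b c : A, doubleBracketL k A D a (D b c) + cyc123 k A (doubleBracketL k A D b (D c a)) +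
    cyc123 k A (cyc123 k A (doubleBracketL k A D c (D a b))) = 0

noncomputable def traceBracket : A →ₗ[k] A →ₗ[k] A ⧸ commutatorSpan k A :=
  D.compr₂ (π ∘ₗ mul' k A)

lemma traceBracket_apply (a b : A) : traceBracket D a b = π (mul' k A (D a b)) := rfl

variable {D}

lemma traceBracket_swap (hskew : IsSkew D) (a b : A) :
    traceBracket D a b = -traceBracket D b a := by
  rw [traceBracket_apply, traceBracket_apply, hskew, map_neg, map_neg, mkQ_mul'_comm]

lemma traceBracket_mul (hder : IsOuterDerivation D) (a b c : A) :
    traceBracket D a (b * c) = π (mul' k A (D a b) * c) + π (b * mul' k A (D a c)) := by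
  rw [traceBracket_apply, hder, map_add, mul'_mul_one_tmul, mul'_tmul_one_mul, map_add]

lemma commutatorSpan_le_ker_flip_traceBracket (hder : IsOuterDerivation D) :
    commutatorSpan k A ≤ (traceBracket D).flip.ker := by
  refine Submodule.span_le.mpr ?_
  rintro _ ⟨b, c, rfl⟩
  ext a
  change traceBracket D a (b * c - c * b) = 0
  rw [map_sub, traceBracket_mul hder, traceBracket_mul hder, mkQ_mul_comm (mul' k A (D a b)), mkQ_mul_comm b]
  abel

lemma commutatorSpan_le_ker_traceBracket (hder : IsOuterDerivation D) (hskew : IsSkew D) :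
    commutatorSpan k A ≤ (traceBracket D).ker := by
  intro x hx
  ext b
  rw [LinearMap.zero_apply, traceBracket_swap hskew, neg_eq_zero]
  exact LinearMap.congr_fun (commutatorSpan_le_ker_flip_traceBracket hder hx) b

lemma traceBracket_apply_mul' (hder : IsOuterDerivation D) (a : A) (t : A ⊗[k] A) :
    traceBracket D a (mul' k A t) = π (mul3 k A (doubleBracketL k A D a t)) +
      π (mul3 k A (doubleBracketL k A D a (TensorProduct.comm k A A t))) := by
  induction t using TensorProduct.induction_on with
  | zero => simp
  | tmul u v =>
    simp only [doubleBracketL, LinearMap.comp_apply, rTensor_tmul, LinearEquiv.coe_coe,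
      mul3_assoc_tmul, comm_tmul, mul'_apply, traceBracket_mul hder]
    rw [mkQ_mul_comm u]
  | add s t hs ht =>
    simp only [map_add, hs, ht]
    abel

lemma mkQ_mul3_doubleJacobi (hjac : IsDoubleJacobi D) (a b c : A) :
    π (mul3 k A (doubleBracketL k A D a (D b c))) + π (mul3 k A (doubleBracketL k A D b (D c a))) +
      π (mul3 k A (doubleBracketL k A D c (D a b))) = 0 := by
  simpa only [map_add, map_zero, mkQ_mul3_cyc123] using
    congrArg (fun t => π (mul3 k A t)) (hjac a b c)

lemma traceBracket_cyclic (hder : IsOuterDerivation D) (hskew : IsSkew D)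
    (hjac : IsDoubleJacobi D) (a b c : A) :
    traceBracket D a (mul' k A (D b c)) + traceBracket D b (mul' k A (D c a)) +
      traceBracket D c (mul' k A (D a b)) = 0 := by
  have comm_D : ∀ x y : A, TensorProduct.comm k A A (D x y) = -D y x := fun x y => by
    rw [hskew y x, neg_neg]
  simp only [traceBracket_apply_mul' hder, comm_D, map_neg]
  have h₁ := mkQ_mul3_doubleJacobi hjac a b c
  have h₂ := mkQ_mul3_doubleJacobi hjac a c b
  linear_combination (norm := module) h₁ - h₂

end DoublePoisson

open DoublePoisson in
theorem stmt4_general (k A : Type) [Field k] [Ring A] [Algebra k A]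
    (D : A →ₗ[k] A →ₗ[k] A ⊗[k] A)
    (hder : ∀ a b c : A,
      D a (b * c) = D a b * ((1 : A) ⊗ₜ[k] c) + (b ⊗ₜ[k] (1 : A)) * D a c)
    (hskew : ∀ a b : A, D a b = - (TensorProduct.comm k A A) (D b a))
    (hjac : ∀ a b c : A,
      doubleBracketL k A D a (D b c) +
        cyc123 k A (doubleBracketL k A D b (D c a)) +
        cyc123 k A (cyc123 k A (doubleBracketL k A D c (D a b))) = 0) :
    ∃ L : (A ⧸ commutatorSpan k A) →ₗ[k]
        (A ⧸ commutatorSpan k A) →ₗ[k] (A ⧸ commutatorSpan k A),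
      (∀ a b : A,
        L (Submodule.Quotient.mk a) (Submodule.Quotient.mk b) =
          Submodule.Quotient.mk (LinearMap.mul' k A (D a b))) ∧
      (∀ x y, L x y = - L y x) ∧
      (∀ x y z, L x (L y z) = L (L x y) z + L y (L x z)) := by
  let L := (traceBracket D).liftQ₂ _ _ (commutatorSpan_le_ker_traceBracket hder hskew)
    (commutatorSpan_le_ker_flip_traceBracket hder)
  have hskewL : ∀ x y, L x y = -L y x := by
    rintro ⟨a⟩ ⟨b⟩
    exact traceBracket_swap hskew a b
  refine ⟨L, fun _ _ => rfl, hskewL, leibniz_of_skew_of_cyclic L hskewL ?_⟩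
  rintro ⟨a⟩ ⟨b⟩ ⟨c⟩
  exact traceBracket_cyclic hder hskew hjac a b c

/-- Let `A` be a double Poisson algebra: an associative algebra with a double
bracket `{{-,-}}` (a derivation in its second argument for the outer bimodule structure)
satisfying skew-symmetry `{{a,b}} = -{{b,a}}°` and the double Jacobi identity.  Then the induced
bracket `{a,b} := μ({{a,b}})` descends to a well-defined Lie bracket on the commutator quotient
`A/[A,A]`. -/
theorem stmt4 (k A : Type) [Field k] [CharZero k] [Ring A] [Algebra k A]
    (D : A →ₗ[k] A →ₗ[k] A ⊗[k] A)
    (hder : ∀ a b c : A,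
      D a (b * c) = D a b * ((1 : A) ⊗ₜ[k] c) + (b ⊗ₜ[k] (1 : A)) * D a c)
    (hskew : ∀ a b : A, D a b = - (TensorProduct.comm k A A) (D b a))
    (hjac : ∀ a b c : A,
      doubleBracketL k A D a (D b c) +
        cyc123 k A (doubleBracketL k A D b (D c a)) +
        cyc123 k A (cyc123 k A (doubleBracketL k A D c (D a b))) = 0) :
    ∃ L : (A ⧸ commutatorSpan k A) →ₗ[k]
        (A ⧸ commutatorSpan k A) →ₗ[k] (A ⧸ commutatorSpan k A),
      (∀ a b : A,
        L (Submodule.Quotient.mk a) (Submodule.Quotient.mk b) =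
          Submodule.Quotient.mk (LinearMap.mul' k A (D a b))) ∧
      (∀ x y, L x y = - L y x) ∧
      (∀ x y z, L x (L y z) = L (L x y) z + L y (L x z)) :=
  stmt4_general k A D hder hskew hjac
end

section
/- Let A be an associative unital algebra over a field k and V a finite-dimensional k-vector space. Then the functor B ↦ Hom_{Alg_k}(A, B ⊗ End(V)) from commutative k-algebras to sets is representable: there is a commutative k-algebra A_V and a natural bijection Hom_{CommAlg_k}(A_V, B) ≅ Hom_{Alg_k}(A, B ⊗ End(V)) for all commutative k-algebras B. -/
/-! Fix a basis `(b i)` of the finite-dimensional algebra `E = End V`. A map `Φ : A → B ⊗ E` is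
determined by its coordinate functions `a ↦ Φ_i(a) ∈ B`, and the conditions making `Φ` an algebra
map are polynomial identities in these coordinates with coefficients the structure constants of `E`.
So `A_V` is the polynomial algebra on symbols `x_{a,i}` modulo the coordinates of the defects of
the generic map `a ↦ ∑ x_{a,i} ⊗ b i`. Over the quotient the generic map becomes an algebra map
`A → A_V ⊗ E`, and every `Φ` is its image under `f ⊗ id` for a unique `f : A_V → B`; naturality
is functoriality of `- ⊗ E`. -/

open scoped TensorProduct

section AlgHomDefects

variable (k : Type*) [CommSemiring k] {A C : Type*} [Semiring A] [Algebra k A]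
  [Ring C] [Algebra k C]

def algHomDefects (ψ : A → C) : Set C :=
  Set.range (fun x : A × A => ψ (x.1 + x.2) - ψ x.1 - ψ x.2) ∪
    Set.range (fun x : k × A => ψ (x.1 • x.2) - x.1 • ψ x.2) ∪ {ψ 1 - 1} ∪
    Set.range (fun x : A × A => ψ (x.1 * x.2) - ψ x.1 * ψ x.2)

variable {k}

theorem image_algHomDefects {D : Type*} [Ring D] [Algebra k D] (h : C →ₐ[k] D) (ψ : A → C) :
    h '' algHomDefects k ψ = algHomDefects k (h ∘ ψ) := by
  simp only [algHomDefects, Set.image_union, Set.image_singleton, ← Set.range_comp,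
    Function.comp_def, map_sub, map_smul, map_mul, map_one]

theorem algHomDefects_subset_zero (Φ : A →ₐ[k] C) : algHomDefects k Φ ⊆ {0} := by
  rintro _ (((⟨x, rfl⟩ | ⟨x, rfl⟩) | rfl) | ⟨x, rfl⟩) <;> simp

def AlgHom.ofAlgHomDefects (ψ : A → C) (h : algHomDefects k ψ ⊆ {0}) : A →ₐ[k] C :=
  AlgHom.ofLinearMap
    { toFun := ψ
      map_add' x y := by
        rw [← sub_eq_zero, ← sub_sub]
        exact h (.inl (.inl (.inl ⟨(x, y), rfl⟩)))
      map_smul' c x := sub_eq_zero.1 (h (.inl (.inl (.inr ⟨(c, x), rfl⟩)))) }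
    (sub_eq_zero.1 (h (.inl (.inr rfl))))
    fun x y => sub_eq_zero.1 (h (.inr ⟨(x, y), rfl⟩))

@[simp]
theorem AlgHom.coe_ofAlgHomDefects (ψ : A → C) (h : algHomDefects k ψ ⊆ {0}) :
    ⇑(AlgHom.ofAlgHomDefects ψ h) = ψ := rfl

end AlgHomDefects

namespace Module.Basis

variable {k E ι : Type*} [CommSemiring k] [Semiring E] [Algebra k E] [Fintype ι] (b : Basis ι k E)
  {R S : Type*} [CommSemiring R] [Algebra k R] [CommSemiring S] [Algebra k S]

theorem map_baseChange_equivFun_symm (g : R →ₐ[k] S) (v : ι → R) :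
    Algebra.TensorProduct.map g (AlgHom.id k E) ((b.baseChange R).equivFun.symm v) =
      (b.baseChange S).equivFun.symm (g ∘ v) := by
  simp [Basis.equivFun_symm_apply, map_sum, TensorProduct.smul_tmul']

theorem baseChange_equivFun_map (g : R →ₐ[k] S) (x : R ⊗[k] E) :
    (b.baseChange S).equivFun (Algebra.TensorProduct.map g (AlgHom.id k E) x) =
      g ∘ (b.baseChange R).equivFun x := by
  rw [← (b.baseChange S).equivFun.apply_symm_apply (g ∘ _), ← map_baseChange_equivFun_symm,
    LinearEquiv.symm_apply_apply]

theorem map_eq_zero_iff_equivFun (g : R →ₐ[k] S) (x : R ⊗[k] E) :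
    Algebra.TensorProduct.map g (AlgHom.id k E) x = 0 ↔
      ∀ i, g ((b.baseChange R).equivFun x i) = 0 := by
  rw [← (b.baseChange S).equivFun.map_eq_zero_iff, baseChange_equivFun_map, funext_iff]
  rfl

end Module.Basis

noncomputable section

namespace RepresentingAlgebra

open Module MvPolynomial Algebra.TensorProduct

variable {k : Type*} [CommRing k] (A : Type*) [Semiring A] [Algebra k A]
  {E ι : Type*} [Ring E] [Algebra k E] [Fintype ι] (b : Basis ι k E)

def genericMap (a : A) : MvPolynomial (A × ι) k ⊗[k] E :=
  (b.baseChange _).equivFun.symm fun i => X (a, i)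

def relations : Ideal (MvPolynomial (A × ι) k) :=
  Ideal.span (⋃ i, (fun d => (b.baseChange _).equivFun d i) '' algHomDefects k (genericMap A b))

abbrev _root_.RepresentingAlgebra : Type _ :=
  MvPolynomial (A × ι) k ⧸ relations A b

variable {A} {B : Type*} [CommRing B] [Algebra k B]

theorem algHomDefects_mk_comp_genericMap_subset_zero :
    algHomDefects k (map (Ideal.Quotient.mkₐ k (relations A b)) (AlgHom.id k E) ∘ genericMap A b)
      ⊆ {0} := by
  rw [← image_algHomDefects]
  rintro _ ⟨d, hd, rfl⟩
  refine (b.map_eq_zero_iff_equivFun _ d).2 fun i => Ideal.Quotient.eq_zero_iff_mem.2 ?_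
  exact Ideal.subset_span (Set.mem_iUnion.2 ⟨i, d, hd, rfl⟩)

variable (A) in
def universalMap : A →ₐ[k] RepresentingAlgebra A b ⊗[k] E :=
  .ofAlgHomDefects _ (algHomDefects_mk_comp_genericMap_subset_zero b)

theorem map_universalMap (f : RepresentingAlgebra A b →ₐ[k] B) (a : A) :
    map f (AlgHom.id k E) (universalMap A b a) =
      (b.baseChange B).equivFun.symm fun i => f (Ideal.Quotient.mkₐ k _ (X (a, i))) := by
  simp only [universalMap, AlgHom.coe_ofAlgHomDefects, Function.comp_apply, genericMap,
    Basis.map_baseChange_equivFun_symm]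
  rfl

theorem map_universalMap_injective :
    Function.Injective fun f : RepresentingAlgebra A b →ₐ[k] B =>
      (map f (AlgHom.id k E)).comp (universalMap A b) := by
  intro f f' h
  refine Ideal.Quotient.algHom_ext _ (MvPolynomial.algHom_ext fun ⟨a, i⟩ => ?_)
  have := congrArg (fun Φ => (b.baseChange B).equivFun (Φ a) i) h
  simpa only [AlgHom.comp_apply, map_universalMap, LinearEquiv.apply_symm_apply] using this

theorem map_universalMap_surjective :
    Function.Surjective fun f : RepresentingAlgebra A b →ₐ[k] B =>
      (map f (AlgHom.id k E)).comp (universalMap A b) := by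
  intro Φ
  let g := aeval (R := k) fun x : A × ι => (b.baseChange B).equivFun (Φ x.1) x.2
  have hg : map g (AlgHom.id k E) ∘ genericMap A b = Φ := by
    ext a
    have hX : g ∘ (fun i => X (a, i)) = (b.baseChange B).equivFun (Φ a) := by
      ext i
      exact aeval_X _ _
    rw [Function.comp_apply, genericMap, Basis.map_baseChange_equivFun_symm, hX,
      LinearEquiv.symm_apply_apply]
  have hrel : relations A b ≤ RingHom.ker g := by
    refine Ideal.span_le.2 fun p hp => ?_
    obtain ⟨i, d, hd, rfl⟩ := Set.mem_iUnion.1 hp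
    have hgd : map g (AlgHom.id k E) d ∈ algHomDefects k Φ := by
      rw [← hg, ← image_algHomDefects]
      exact ⟨d, hd, rfl⟩
    exact (b.map_eq_zero_iff_equivFun g d).1 (algHomDefects_subset_zero Φ hgd) i
  refine ⟨Ideal.Quotient.liftₐ _ g fun p hp => hrel hp, AlgHom.ext fun a => ?_⟩
  rw [AlgHom.comp_apply, map_universalMap, ← hg, Function.comp_apply, genericMap,
    Basis.map_baseChange_equivFun_symm]
  congr 1

def equiv (B : Type*) [CommRing B] [Algebra k B] :
    (RepresentingAlgebra A b →ₐ[k] B) ≃ (A →ₐ[k] B ⊗[k] E) :=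
  .ofBijective _ ⟨map_universalMap_injective b, map_universalMap_surjective b⟩

@[simp]
theorem equiv_apply (f : RepresentingAlgebra A b →ₐ[k] B) :
    equiv b B f = (map f (AlgHom.id k E)).comp (universalMap A b) :=
  rfl

theorem equiv_comp {B₁ B₂ : Type*} [CommRing B₁] [Algebra k B₁] [CommRing B₂] [Algebra k B₂]
    (g : B₁ →ₐ[k] B₂) (f : RepresentingAlgebra A b →ₐ[k] B₁) :
    equiv b B₂ (g.comp f) = (map g (AlgHom.id k E)).comp (equiv b B₁ f) := by
  rw [equiv_apply, equiv_apply, ← AlgHom.comp_assoc, ← map_comp, AlgHom.id_comp]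

end RepresentingAlgebra

end

/-- Let `A` be an associative unital algebra over a field `k` and `V` a
finite-dimensional `k`-vector space.  Then the functor `B ↦ Hom_{Alg_k}(A, B ⊗ End(V))` from
commutative `k`-algebras to sets is representable: there is a commutative `k`-algebra `A_V` and
a bijection `Hom_{CommAlg_k}(A_V, B) ≅ Hom_{Alg_k}(A, B ⊗ End(V))`, natural in `B`. -/
theorem stmt19 (k A V : Type) [Field k] [Ring A] [Algebra k A]
    [AddCommGroup V] [Module k V] [FiniteDimensional k V] :
    ∃ (AV : Type) (_ : CommRing AV) (_ : Algebra k AV)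
      (e : ∀ (B : Type) [CommRing B] [Algebra k B],
        (AV →ₐ[k] B) ≃ (A →ₐ[k] B ⊗[k] Module.End k V)),
      ∀ (B₁ B₂ : Type) [CommRing B₁] [Algebra k B₁] [CommRing B₂] [Algebra k B₂]
        (g : B₁ →ₐ[k] B₂) (f : AV →ₐ[k] B₁),
        e B₂ (g.comp f) =
          (Algebra.TensorProduct.map g (AlgHom.id k (Module.End k V))).comp (e B₁ f) := by
  let b := Module.finBasis k (Module.End k V)
  exact ⟨RepresentingAlgebra A b, inferInstance, inferInstance,
    fun B _ _ => RepresentingAlgebra.equiv b B,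
    fun _ _ _ _ _ _ g f => RepresentingAlgebra.equiv_comp b g f⟩
end
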